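/- If G is a chromatically bipartite plane graph (e.g., a quadrangulation) and G admits a coloring with colors {3,4} assigned to some vertices such that every face is incident with at most one vertex colored 4 and every face not incident with a vertex colored 4 is incident with exactly one vertex colored 3, then coloring the remaining vertices properly with colors {1,2} yields a FUM-coloring of G with at most 4 colors, provided the partial {3,4}-coloring together with the {1,2}-coloring is proper. -/
import Mathlib


/-- A plane graph, abstracted combinatorially: a simple graph together with its
set of faces, each face given by the set of vertices incident with it, and a
distinguished outer face. -/
structure PlaneGraph (V : Type*) where
  graph : SimpleGraph V
  faces : Set (Set V)
  outer : Set V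
  outer_mem : outer ∈ faces

/-- A FUM-coloring with colors `{1, …, k}`: proper, and on every face there is a
unique vertex whose color is maximal on that face. -/
def IsFUMColoring {V : Type*} (P : PlaneGraph V) (k : ℕ) (c : V → ℕ) : Prop :=
  (∀ v, 1 ≤ c v ∧ c v ≤ k) ∧
  (∀ u v, P.graph.Adj u v → c u ≠ c v) ∧
  (∀ f ∈ P.faces, ∃! v, v ∈ f ∧ ∀ u ∈ f, c u ≤ c v)

/-- If `G` is a chromatically bipartite plane graph and `c` is a proper
coloring taking values in {3,4} on a set `S` of vertices and in {1,2} outside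
`S`, such that every face has at most one vertex colored 4 and every face with
no vertex colored 4 has exactly one vertex colored 3, then `c` is a
FUM-coloring of `G` with at most 4 colors. -/
theorem stmt_19 {V : Type*} (P : PlaneGraph V) (hbip : P.graph.Colorable 2)
    (S : Set V) (c : V → ℕ)
    (hS : ∀ v ∈ S, c v = 3 ∨ c v = 4)
    (hnS : ∀ v ∉ S, c v = 1 ∨ c v = 2)
    (hproper : ∀ u v, P.graph.Adj u v → c u ≠ c v)
    (h4 : ∀ f ∈ P.faces, {v ∈ f | c v = 4}.Subsingleton)
    (h3 : ∀ f ∈ P.faces, (∀ v ∈ f, c v ≠ 4) → ∃! v, v ∈ f ∧ c v = 3) :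
    IsFUMColoring P 4 c := by
  have hbound : ∀ v, 1 ≤ c v ∧ c v ≤ 4 := by
    intro v
    by_cases hv : v ∈ S
    · rcases hS v hv with h | h <;> omega
    · rcases hnS v hv with h | h <;> omega
  refine ⟨hbound, hproper, ?_⟩
  intro f hf
  by_cases h4f : ∃ v ∈ f, c v = 4
  · obtain ⟨v, hvf, hv4⟩ := h4f
    refine ⟨v, ⟨hvf, fun u hu => by rw [hv4]; exact (hbound u).2⟩, ?_⟩
    rintro w ⟨hwf, hwmax⟩
    have : c w = 4 := le_antisymm (hbound w).2 (hv4 ▸ hwmax v hvf)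
    exact h4 f hf ⟨hwf, this⟩ ⟨hvf, hv4⟩
  · push_neg at h4f
    obtain ⟨v, ⟨hvf, hv3⟩, huniq⟩ := h3 f hf h4f
    refine ⟨v, ⟨hvf, ?_⟩, ?_⟩
    · intro u hu
      have := (hbound u).2
      have := h4f u hu
      omega
    · rintro w ⟨hwf, hwmax⟩
      have h1 : c v ≤ c w := hwmax v hvf
      have h2 := (hbound w).2
      have h3' := h4f w hwf
      exact huniq w ⟨hwf, by omega⟩
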